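/- arXiv:1501.01183 — 5 statements merged into one kernel-verified Lean document; each statement's English description precedes it below -/
import Mathlib

section
/- Let 𝒢₁ ⊆ 𝒢₂ and 𝒢 be sub-σ-algebras of ℱ on a probability space (Ω,ℱ,ℙ) such that E[1_G | 𝒢₁] = E[1_G | 𝒢₂] a.s. for all G ∈ 𝒢. Then for every integrable random variable X, E[ E[X | 𝒢₁ ∨ 𝒢] | 𝒢₂ ] = E[X | 𝒢₁] almost surely. -/
/-!
The hypothesis says that `𝒢₂` and `𝒢` are conditionally independent given `𝒢₁`. It upgrades to
`E[1_S | 𝒢₁ ∨ 𝒢] = E[1_S | 𝒢₁]` for every `S ∈ 𝒢₂` by a π-λ argument over the sets `A ∩ B` with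
`A ∈ 𝒢₁`, `B ∈ 𝒢`: on such a set both sides integrate to `E[1_A E[1_S | 𝒢₁] E[1_B | 𝒢₁]]`,
because `E[1_B | 𝒢₂] = E[1_B | 𝒢₁]` may be inserted against any bounded `𝒢₂`-measurable factor.
Then for `S ∈ 𝒢₂`, by self-adjointness of conditional expectation,
`∫_S E[X | 𝒢₁ ∨ 𝒢] = E[E[1_S | 𝒢₁ ∨ 𝒢] X] = E[E[1_S | 𝒢₁] X] = ∫_S E[X | 𝒢₁]`,
and `E[X | 𝒢₁]` is `𝒢₂`-measurable, so it is `E[E[X | 𝒢₁ ∨ 𝒢] | 𝒢₂]`.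
-/

open MeasureTheory

theorem isPiSystem_image2_inter_measurableSet {α : Type*} (m₁ m₂ : MeasurableSpace α) :
    IsPiSystem (Set.image2 (· ∩ ·) {s | MeasurableSet[m₁] s} {t | MeasurableSet[m₂] t}) := by
  rintro _ ⟨s₁, hs₁, t₁, ht₁, rfl⟩ _ ⟨s₂, hs₂, t₂, ht₂, rfl⟩ -
  exact ⟨s₁ ∩ s₂, hs₁.inter hs₂, t₁ ∩ t₂, ht₁.inter ht₂, Set.inter_inter_inter_comm ..⟩

theorem generateFrom_image2_inter_measurableSet {α : Type*} (m₁ m₂ : MeasurableSpace α) :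
    MeasurableSpace.generateFrom
      (Set.image2 (· ∩ ·) {s | MeasurableSet[m₁] s} {t | MeasurableSet[m₂] t}) = m₁ ⊔ m₂ := by
  refine le_antisymm (MeasurableSpace.generateFrom_le ?_) (sup_le (fun s hs => ?_) fun t ht => ?_)
  · rintro _ ⟨s, hs, t, ht, rfl⟩
    exact (le_sup_left (b := m₂) s hs).inter (le_sup_right (a := m₁) t ht)
  · exact .basic _ ⟨s, hs, Set.univ, .univ, Set.inter_univ s⟩
  · exact .basic _ ⟨Set.univ, .univ, t, ht, Set.univ_inter t⟩

namespace MeasureTheory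

variable {Ω : Type*} {m G₁ G₂ G m0 : MeasurableSpace Ω} {μ : Measure Ω}

theorem setIntegral_eq_of_isPiSystem {E : Type*} [NormedAddCommGroup E] [NormedSpace ℝ E]
    {S : Set (Set Ω)} (hm : m ≤ m0) (hgen : m = MeasurableSpace.generateFrom S)
    (hS : IsPiSystem S) {f g : Ω → E} (hf : Integrable f μ) (hg : Integrable g μ)
    (h_univ : ∫ x, f x ∂μ = ∫ x, g x ∂μ)
    (h_basic : ∀ t ∈ S, ∫ x in t, f x ∂μ = ∫ x in t, g x ∂μ)
    {t : Set Ω} (ht : MeasurableSet[m] t) : ∫ x in t, f x ∂μ = ∫ x in t, g x ∂μ := by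
  induction t, ht using MeasurableSpace.induction_on_inter hgen hS with
  | empty => simp
  | basic t ht => exact h_basic t ht
  | compl t ht ih =>
    rw [setIntegral_compl (hm t ht) hf, setIntegral_compl (hm t ht) hg, ih, h_univ]
  | iUnion u hu_disj hu ih =>
    rw [integral_iUnion (fun i => hm _ (hu i)) hu_disj hf.integrableOn,
      integral_iUnion (fun i => hm _ (hu i)) hu_disj hg.integrableOn]
    exact tsum_congr ih

theorem integral_mul_condExp_of_bound [IsFiniteMeasure μ] (hm : m ≤ m0) {f g : Ω → ℝ}
    (hf : AEStronglyMeasurable[m] f μ) {c : ℝ} (hfc : ∀ᵐ x ∂μ, ‖f x‖ ≤ c)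
    (hg : Integrable g μ) :
    ∫ x, f x * μ[g|m] x ∂μ = ∫ x, f x * g x ∂μ := calc
  _ = ∫ x, μ[f * g|m] x ∂μ :=
    integral_congr_ae (condExp_stronglyMeasurable_mul_of_bound₀ hm hf hg c hfc).symm
  _ = _ := integral_condExp hm

theorem integral_mul_condExp_eq_integral_condExp_mul [IsFiniteMeasure μ] (hm : m ≤ m0)
    {f g : Ω → ℝ} (hf : AEStronglyMeasurable f μ) {c : ℝ} (hfc : ∀ᵐ x ∂μ, ‖f x‖ ≤ c)
    (hg : Integrable g μ) :
    ∫ x, f x * μ[g|m] x ∂μ = ∫ x, μ[f|m] x * g x ∂μ := calc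
  _ = ∫ x, μ[f * μ[g|m]|m] x ∂μ := (integral_condExp hm).symm
  _ = ∫ x, μ[f|m] x * μ[g|m] x ∂μ := integral_congr_ae <|
    condExp_mul_of_aestronglyMeasurable_right stronglyMeasurable_condExp.aestronglyMeasurable
      (integrable_condExp.bdd_mul hf hfc) (.of_bound hf c hfc)
  _ = ∫ x, μ[f|m] x * g x ∂μ := integral_mul_condExp_of_bound hm
    stronglyMeasurable_condExp.aestronglyMeasurable (ae_bdd_norm_condExp_of_ae_bdd_norm hfc) hg

theorem norm_indicator_one_le (s : Set Ω) (x : Ω) : ‖s.indicator (fun _ => (1 : ℝ)) x‖ ≤ 1 :=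
  (norm_indicator_le_norm_self _ x).trans norm_one.le

theorem ae_norm_condExp_indicator_one_le (s : Set Ω) :
    ∀ᵐ x ∂μ, ‖μ[s.indicator (fun _ => (1 : ℝ))|m] x‖ ≤ 1 :=
  ae_bdd_norm_condExp_of_ae_bdd_norm <| .of_forall (norm_indicator_one_le s)

theorem setIntegral_eq_integral_indicator_one_mul {s : Set Ω} (hs : MeasurableSet s)
    (f : Ω → ℝ) : ∫ x in s, f x ∂μ = ∫ x, s.indicator (fun _ => (1 : ℝ)) x * f x ∂μ := by
  rw [← integral_indicator hs]
  congr with x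
  by_cases hx : x ∈ s <;> simp [hx]

theorem setIntegral_inter_eq_integral_indicator_one_mul_indicator {s t : Set Ω}
    (hs : MeasurableSet s) (ht : MeasurableSet t) (f : Ω → ℝ) :
    ∫ x in s ∩ t, f x ∂μ = ∫ x, t.indicator (fun _ => (1 : ℝ)) x * s.indicator f x ∂μ := by
  rw [Set.inter_comm, ← setIntegral_indicator hs, setIntegral_eq_integral_indicator_one_mul ht]

theorem integral_indicator_one_mul_eq_integral_condExp_mul [IsFiniteMeasure μ]
    (hG₂ : G₂ ≤ m0) (hG : G ≤ m0)
    (hind : ∀ A : Set Ω, MeasurableSet[G] A →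
      μ[(A.indicator (fun _ => (1 : ℝ))) | G₁] =ᵐ[μ] μ[(A.indicator (fun _ => (1 : ℝ))) | G₂])
    {B : Set Ω} (hB : MeasurableSet[G] B) {f : Ω → ℝ}
    (hf : AEStronglyMeasurable[G₂] f μ) {c : ℝ} (hfc : ∀ᵐ x ∂μ, ‖f x‖ ≤ c) :
    ∫ x, B.indicator (fun _ => (1 : ℝ)) x * f x ∂μ =
      ∫ x, μ[B.indicator (fun _ => (1 : ℝ))|G₁] x * f x ∂μ := calc
  _ = ∫ x, B.indicator (fun _ => (1 : ℝ)) x * μ[f|G₂] x ∂μ := integral_congr_ae <| by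
    filter_upwards [condExp_of_aestronglyMeasurable' hG₂ hf (.of_bound (hf.mono hG₂) c hfc)]
      with x hx using by rw [hx]
  _ = ∫ x, μ[B.indicator (fun _ => (1 : ℝ))|G₂] x * f x ∂μ :=
    integral_mul_condExp_eq_integral_condExp_mul hG₂
      (aestronglyMeasurable_const.indicator (hG B hB)) (.of_forall (norm_indicator_one_le B))
      (.of_bound (hf.mono hG₂) c hfc)
  _ = _ := integral_congr_ae (by filter_upwards [hind B hB] with x hx using by rw [hx])

theorem setIntegral_inter_condExp_indicator [IsFiniteMeasure μ]
    (hG₁ : G₁ ≤ m0) (hG₂ : G₂ ≤ m0) (hG : G ≤ m0) (h₁₂ : G₁ ≤ G₂)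
    (hind : ∀ A : Set Ω, MeasurableSet[G] A →
      μ[(A.indicator (fun _ => (1 : ℝ))) | G₁] =ᵐ[μ] μ[(A.indicator (fun _ => (1 : ℝ))) | G₂])
    {s A B : Set Ω} (hs : MeasurableSet[G₂] s) (hA : MeasurableSet[G₁] A)
    (hB : MeasurableSet[G] B) :
    ∫ x in A ∩ B, μ[s.indicator (fun _ => (1 : ℝ))|G₁] x ∂μ =
      ∫ x in A ∩ B, s.indicator (fun _ => (1 : ℝ)) x ∂μ := by
  set χs : Ω → ℝ := s.indicator fun _ => 1
  set g := μ[χs|G₁]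
  set k := μ[B.indicator (fun _ => (1 : ℝ))|G₁]
  have hA₀ : MeasurableSet A := hG₁ A hA
  have hB₀ : MeasurableSet B := hG B hB
  have hg : ∀ᵐ x ∂μ, ‖A.indicator g x‖ ≤ 1 := by
    filter_upwards [ae_norm_condExp_indicator_one_le s] with x hx
    exact (norm_indicator_le_norm_self _ x).trans hx
  have hk : ∀ᵐ x ∂μ, ‖A.indicator k x‖ ≤ 1 := by
    filter_upwards [ae_norm_condExp_indicator_one_le B] with x hx
    exact (norm_indicator_le_norm_self _ x).trans hx
  have hχs : ∀ᵐ x ∂μ, ‖A.indicator χs x‖ ≤ 1 := .of_forall fun x =>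
    (norm_indicator_le_norm_self _ x).trans (norm_indicator_one_le s x)
  calc ∫ x in A ∩ B, g x ∂μ
      = ∫ x, k x * A.indicator g x ∂μ := by
        rw [setIntegral_inter_eq_integral_indicator_one_mul_indicator hA₀ hB₀]
        exact integral_indicator_one_mul_eq_integral_condExp_mul hG₂ hG hind hB
          ((stronglyMeasurable_condExp.indicator hA).mono h₁₂).aestronglyMeasurable hg
    _ = ∫ x, A.indicator k x * g x ∂μ := by
        congr with x
        rw [← Set.indicator_mul_right A k g, Set.indicator_mul_left]
    _ = ∫ x, A.indicator k x * χs x ∂μ := integral_mul_condExp_of_bound hG₁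
        (stronglyMeasurable_condExp.indicator hA).aestronglyMeasurable hk
        ((integrable_const 1).indicator (hG₂ s hs))
    _ = ∫ x, k x * A.indicator χs x ∂μ := by
        congr with x
        rw [← Set.indicator_mul_right A k χs, Set.indicator_mul_left]
    _ = ∫ x in A ∩ B, χs x ∂μ := by
        rw [setIntegral_inter_eq_integral_indicator_one_mul_indicator hA₀ hB₀]
        exact (integral_indicator_one_mul_eq_integral_condExp_mul hG₂ hG hind hB
          ((stronglyMeasurable_const.indicator hs).indicator (h₁₂ A hA)).aestronglyMeasurable
          hχs).symm

theorem condExp_sup_indicator_ae_eq_condExp [IsFiniteMeasure μ]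
    (hG₁ : G₁ ≤ m0) (hG₂ : G₂ ≤ m0) (hG : G ≤ m0) (h₁₂ : G₁ ≤ G₂)
    (hind : ∀ A : Set Ω, MeasurableSet[G] A →
      μ[(A.indicator (fun _ => (1 : ℝ))) | G₁] =ᵐ[μ] μ[(A.indicator (fun _ => (1 : ℝ))) | G₂])
    {s : Set Ω} (hs : MeasurableSet[G₂] s) :
    μ[s.indicator (fun _ => (1 : ℝ))|G₁ ⊔ G] =ᵐ[μ] μ[s.indicator (fun _ => (1 : ℝ))|G₁] := by
  have hχs : Integrable (s.indicator fun _ => (1 : ℝ)) μ :=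
    (integrable_const 1).indicator (hG₂ s hs)
  refine (ae_eq_condExp_of_forall_setIntegral_eq (sup_le hG₁ hG) hχs
    (fun _ _ _ => integrable_condExp.integrableOn) (fun t ht _ => ?_)
    (stronglyMeasurable_condExp.mono (le_sup_left : G₁ ≤ G₁ ⊔ G)).aestronglyMeasurable).symm
  refine setIntegral_eq_of_isPiSystem (sup_le hG₁ hG)
    (generateFrom_image2_inter_measurableSet G₁ G).symm
    (isPiSystem_image2_inter_measurableSet G₁ G) integrable_condExp hχs (integral_condExp hG₁)
    ?_ ht
  rintro _ ⟨A, hA, B, hB, rfl⟩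
  exact setIntegral_inter_condExp_indicator hG₁ hG₂ hG h₁₂ hind hs hA hB

end MeasureTheory

/-- If `𝒢₁ ⊆ 𝒢₂` and `𝒢` are sub-σ-algebras such that `E[1_G | 𝒢₁] = E[1_G | 𝒢₂]` a.s.
for every `G ∈ 𝒢`, then for every integrable `X`,
`E[ E[X | 𝒢₁ ⊔ 𝒢] | 𝒢₂ ] = E[X | 𝒢₁]` almost surely. -/
theorem condexp_condexp_sup_of_indicator_eq
    {Ω : Type*} {m0 : MeasurableSpace Ω} {μ : Measure Ω} [IsProbabilityMeasure μ]
    {G1 G2 G : MeasurableSpace Ω}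
    (hG1 : G1 ≤ m0) (hG2 : G2 ≤ m0) (hG : G ≤ m0) (h12 : G1 ≤ G2)
    (hind : ∀ A : Set Ω, MeasurableSet[G] A →
      μ[(A.indicator (fun _ => (1 : ℝ))) | G1] =ᵐ[μ] μ[(A.indicator (fun _ => (1 : ℝ))) | G2])
    (X : Ω → ℝ) (hX : Integrable X μ) :
    μ[ (μ[X | G1 ⊔ G]) | G2] =ᵐ[μ] μ[X | G1] := by
  refine (ae_eq_condExp_of_forall_setIntegral_eq hG2 integrable_condExp
    (fun _ _ _ => integrable_condExp.integrableOn) (fun s hs _ => ?_)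
    (stronglyMeasurable_condExp.mono h12).aestronglyMeasurable).symm
  have hs₀ : MeasurableSet[m0] s := hG2 s hs
  have hχs : AEStronglyMeasurable[m0] (s.indicator fun _ => (1 : ℝ)) μ :=
    aestronglyMeasurable_const.indicator hs₀
  have hχs_le : ∀ᵐ x ∂μ, ‖s.indicator (fun _ => (1 : ℝ)) x‖ ≤ 1 :=
    .of_forall (norm_indicator_one_le s)
  calc ∫ x in s, μ[X|G1] x ∂μ
      = ∫ x, s.indicator (fun _ => (1 : ℝ)) x * μ[X|G1] x ∂μ :=
        setIntegral_eq_integral_indicator_one_mul hs₀ _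
    _ = ∫ x, μ[s.indicator (fun _ => (1 : ℝ))|G1] x * X x ∂μ :=
        integral_mul_condExp_eq_integral_condExp_mul hG1 hχs hχs_le hX
    _ = ∫ x, μ[s.indicator (fun _ => (1 : ℝ))|G1 ⊔ G] x * X x ∂μ := integral_congr_ae <| by
        filter_upwards [condExp_sup_indicator_ae_eq_condExp hG1 hG2 hG h12 hind hs] with x hx
        rw [hx]
    _ = ∫ x, s.indicator (fun _ => (1 : ℝ)) x * μ[X|G1 ⊔ G] x ∂μ :=
        (integral_mul_condExp_eq_integral_condExp_mul (sup_le hG1 hG) hχs hχs_le hX).symm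
    _ = ∫ x in s, μ[X|G1 ⊔ G] x ∂μ := (setIntegral_eq_integral_indicator_one_mul hs₀ _).symm
end

section
/- Good-λ / weighted iteration theorem: Let A be continuous adapted with A₀ = 0 and Ψ cádlág adapted positive on [0,R]. Suppose there is θ ∈ (0,1/2) such that ℙ_B(|A_R − A_σ| > ν) ≤ θ + W_Ψ(B,ν;σ)/ℙ(B) for all ν > 0, stopping times σ, and B ∈ 𝒢_σ of positive measure, where W_Ψ(B,ν;σ) := ℙ(B ∩ {sup_{u∈[σ,R]} Ψ_u > ν}). Then there exist constants a, α > 0 depending only on θ such that ℙ_B(sup_{u∈[σ,R]}|A_u − A_σ| > λ + aμν) ≤ e^{1−μ}·ℙ_B(sup_{u∈[σ,R]}|A_u − A_σ| > λ) + α·W_Ψ(B,ν;σ)/ℙ(B) for all λ, μ, ν > 0. -/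
/-!
Stop at the first time `τ₁` after `σ` at which `|A - A_σ|` reaches `c + ν`, and then at the first
time `τ₂` after `τ₁` at which `|A - A_{τ₁}|` reaches `3ν`. Continuity pins `|A_{τ₁} - A_σ|` at
`c + ν`, so an increment beyond `c + 4ν` forces `|A_R - A_{τ₁}| > ν` or `|A_R - A_{τ₂}| > ν`, and
the hypothesis at `τ₁` and `τ₂` gives
`ℙ(B ∩ {sup > c + 4ν}) ≤ 2θ ℙ(B ∩ {sup > c}) + 2 W_Ψ(B, ν; σ)`.
As `2θ < 1`, iterating this `k = ⌈(μ - 1) / log (1 / 2θ)⌉` times produces the factor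
`(2θ)^k ≤ e^{1-μ}` for a shift `4kν ≤ aμν`, with `a = 4 (1 / log (1 / 2θ) + 1)` and
`α = 2 / (1 - 2θ)`.
-/

open MeasureTheory Set Filter

section ExitTime

variable {f g : ℝ → ℝ} {s t R c u : ℝ}

-- Inserting `R` caps the exit time at `R` and keeps the infimum away from `sInf ∅ = 0`.
noncomputable def exitTime (f : ℝ → ℝ) (s R c : ℝ) : ℝ :=
  sInf (insert R {u ∈ Icc s R | c ≤ |f u - f s|})

lemma bddBelow_exitTime_set : BddBelow (insert R {u ∈ Icc s R | c ≤ |f u - f s|}) :=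
  (bddBelow_Icc.mono (sep_subset _ _)).insert R

lemma exitTime_le (hu : u ∈ Icc s R) (hcu : c ≤ |f u - f s|) : exitTime f s R c ≤ u :=
  csInf_le bddBelow_exitTime_set (mem_insert_of_mem R ⟨hu, hcu⟩)

lemma exitTime_le_right : exitTime f s R c ≤ R :=
  csInf_le bddBelow_exitTime_set (mem_insert R _)

lemma exitTime_mem_Icc (hsR : s ≤ R) : exitTime f s R c ∈ Icc s R := by
  refine ⟨le_csInf (insert_nonempty _ _) ?_, exitTime_le_right⟩
  rintro u (rfl | hu)
  exacts [hsR, hu.1.1]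

lemma exitTime_mem (hf : Continuous f) :
    exitTime f s R c ∈ insert R {u ∈ Icc s R | c ≤ |f u - f s|} := by
  refine IsClosed.csInf_mem ?_ (insert_nonempty _ _) bddBelow_exitTime_set
  rw [insert_eq]
  exact isClosed_singleton.union
    (isClosed_Icc.inter (isClosed_le continuous_const (hf.sub continuous_const).abs))

lemma le_abs_sub_exitTime (hf : Continuous f) (h : ∃ u ∈ Icc s R, c ≤ |f u - f s|) :
    c ≤ |f (exitTime f s R c) - f s| := by
  obtain ⟨u, hu, hcu⟩ := h
  rcases exitTime_mem (s := s) (R := R) (c := c) hf with hR | hS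
  · have : u = R := le_antisymm hu.2 (hR ▸ exitTime_le hu hcu)
    rwa [hR, ← this]
  · exact hS.2

-- By the intermediate value theorem the path cannot overshoot the level `c`.
lemma abs_sub_exitTime_le (hf : Continuous f) (hc : 0 ≤ c) (hsR : s ≤ R) :
    |f (exitTime f s R c) - f s| ≤ c := by
  set τ := exitTime f s R c
  by_contra! hlt
  have hsτ := (exitTime_mem_Icc (f := f) (c := c) hsR).1
  obtain ⟨v, hv, hvc⟩ : c ∈ (fun u => |f u - f s|) '' Icc s τ :=
    intermediate_value_Icc hsτ (by fun_prop) ⟨by simpa using hc, hlt.le⟩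
  have hτv : τ ≤ v := exitTime_le ⟨hv.1, hv.2.trans exitTime_le_right⟩ hvc.ge
  rw [le_antisymm hv.2 hτv] at hvc
  exact hlt.ne' hvc

lemma exitTime_le_iff (hf : Continuous f) (htR : t < R) :
    exitTime f s R c ≤ t ↔ ∃ u ∈ Icc s t, c ≤ |f u - f s| := by
  refine ⟨fun h => ?_, fun ⟨u, hu, hcu⟩ => (exitTime_le ⟨hu.1, hu.2.trans htR.le⟩ hcu).trans hu.2⟩
  rcases exitTime_mem (s := s) (R := R) (c := c) hf with hR | hS
  · exact absurd (hR ▸ h) htR.not_ge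
  · exact ⟨_, ⟨hS.1.1, h⟩, hS.2⟩

lemma exists_le_iff_forall_exists_rat (hg : Continuous g) (hst : s ≤ t) :
    (∃ u ∈ Icc s t, c ≤ g u) ↔
      ∀ n : ℕ, ∃ q : ℚ, c - 1 / (n + 1) < g (min (max q s) t) := by
  constructor
  · rintro ⟨u, hu, hcu⟩ n
    have hopen : IsOpen {x : ℝ | c - 1 / (n + 1) < g (min (max x s) t)} :=
      isOpen_lt continuous_const (by fun_prop)
    have hu' : u ∈ {x : ℝ | c - 1 / (n + 1) < g (min (max x s) t)} := by
      simp only [mem_ofPred_eq, max_eq_left hu.1, min_eq_left hu.2]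
      linarith [Nat.one_div_pos_of_nat (α := ℝ) (n := n)]
    exact Rat.denseRange_cast.exists_mem_open hopen ⟨u, hu'⟩
  · intro h
    obtain ⟨u, hu, hmax⟩ := isCompact_Icc.exists_isMaxOn (nonempty_Icc.2 hst) hg.continuousOn
    refine ⟨u, hu, le_of_not_gt fun hlt => ?_⟩
    obtain ⟨n, hn⟩ := exists_nat_one_div_lt (sub_pos.2 hlt)
    obtain ⟨q, hq⟩ := h n
    have : g (min (max q s) t) ≤ g u := hmax ⟨le_min (le_max_right _ _) hst, min_le_right _ _⟩
    linarith

end ExitTime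

section StoppingTime

variable {Ω : Type*} {m0 : MeasurableSpace Ω} {𝒢 : Filtration ℝ m0} {A : ℝ → Ω → ℝ}
  {σ τ : Ω → ℝ} {R c t : ℝ}

lemma measurable_comp_stoppingTime_of_le (hA : IsStronglyProgressive 𝒢 A)
    (hτ : IsStoppingTime 𝒢 fun ω => (τ ω : WithTop ℝ)) (hτt : ∀ ω, τ ω ≤ t) :
    Measurable[𝒢 t] fun ω => A (τ ω) ω :=
  (stronglyMeasurable_stoppedValue_of_le hA hτ fun ω => WithTop.coe_le_coe.2 (hτt ω)).measurable

lemma isStoppingTime_exitTime (hA : IsStronglyProgressive 𝒢 A)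
    (hAc : ∀ ω, Continuous fun r => A r ω) (hσ : IsStoppingTime 𝒢 fun ω => (σ ω : WithTop ℝ)) :
    IsStoppingTime 𝒢 fun ω => (exitTime (A · ω) (σ ω) R c : WithTop ℝ) := by
  intro t
  simp only [WithTop.coe_le_coe]
  rcases le_or_gt R t with hRt | htR
  · simp only [exitTime_le_right.trans hRt, ofPred_true, MeasurableSet.univ]
  have hclamp (q : ℚ) :
      IsStoppingTime 𝒢 fun ω => ((min (max (q : ℝ) (σ ω)) t : ℝ) : WithTop ℝ) := by
    simpa [max_comm, WithTop.coe_min, WithTop.coe_max] using (hσ.max_const (q : ℝ)).min_const t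
  have hset : {ω | exitTime (A · ω) (σ ω) R c ≤ t} = {ω | σ ω ≤ t} ∩
      ⋂ n : ℕ, ⋃ q : ℚ, {ω | c - 1 / (n + 1) <
        |A (min (max (q : ℝ) (σ ω)) t) ω - A (min (σ ω) t) ω|} := by
    ext ω
    simp only [mem_ofPred_eq, mem_inter_iff, mem_iInter, mem_iUnion, exitTime_le_iff (hAc ω) htR]
    have hg : Continuous fun u => |A u ω - A (σ ω) ω| := ((hAc ω).sub continuous_const).abs
    constructor
    · rintro ⟨u, hu, hcu⟩
      have hσt := hu.1.trans hu.2
      rw [min_eq_left hσt]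
      exact ⟨hσt, (exists_le_iff_forall_exists_rat hg hσt).1 ⟨u, hu, hcu⟩⟩
    · rintro ⟨hσt, hq⟩
      rw [min_eq_left hσt] at hq
      exact (exists_le_iff_forall_exists_rat hg hσt).2 hq
  rw [hset]
  refine (by simpa only [WithTop.coe_le_coe] using hσ.measurableSet_le t :
    MeasurableSet[𝒢 t] {ω | σ ω ≤ t}).inter ?_
  refine .iInter fun n => .iUnion fun q => ?_
  exact continuous_abs.measurable.comp
    ((measurable_comp_stoppingTime_of_le hA (hclamp q) fun ω => min_le_right _ _).sub
      (measurable_comp_stoppingTime_of_le hA (by simpa [WithTop.coe_min] using hσ.min_const t)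
        fun ω => min_le_right _ _)) measurableSet_Ioi

lemma measurableSet_inter_le_abs_sub (hA : IsStronglyProgressive 𝒢 A)
    (hσ : IsStoppingTime 𝒢 fun ω => (σ ω : WithTop ℝ))
    (hτ : IsStoppingTime 𝒢 fun ω => (τ ω : WithTop ℝ)) (hστ : ∀ ω, σ ω ≤ τ ω)
    {B : Set Ω} (hB : MeasurableSet[hσ.measurableSpace] B) (c : ℝ) :
    MeasurableSet[hτ.measurableSpace] (B ∩ {ω | c ≤ |A (τ ω) ω - A (σ ω) ω|}) := by
  have hle := hσ.measurableSpace_mono hτ fun ω => WithTop.coe_le_coe.2 (hστ ω)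
  exact (hle B hB).inter <| continuous_abs.measurable.comp ((measurable_stoppedValue hA hτ).sub
    ((measurable_stoppedValue hA hσ).mono hle le_rfl)) measurableSet_Ici

end StoppingTime

lemma le_pow_mul_add_div_of_le_mul_add {p : ℕ → ℝ} {r w : ℝ} (hr0 : 0 ≤ r) (hr1 : r < 1)
    (hw : 0 ≤ w) (hp : ∀ k, p (k + 1) ≤ r * p k + w) (k : ℕ) :
    p k ≤ r ^ k * p 0 + w / (1 - r) := by
  induction k with
  | zero => simpa using div_nonneg hw (sub_nonneg.2 hr1.le)
  | succ k ih =>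
    calc p (k + 1) ≤ r * (r ^ k * p 0 + w / (1 - r)) + w :=
          (hp k).trans (by gcongr)
      _ = r ^ (k + 1) * p 0 + w / (1 - r) := by
          field_simp [(sub_pos.2 hr1).ne']
          ring

lemma exists_nat_sub_one_le_mul_and_le {L x : ℝ} (hL : 0 < L) (hx : 0 < x) :
    ∃ k : ℕ, x - 1 ≤ k * L ∧ (k : ℝ) ≤ x * (L⁻¹ + 1) := by
  refine ⟨⌈(x - 1) / L⌉₊, (div_le_iff₀ hL).1 (Nat.le_ceil _), ?_⟩
  rcases le_or_gt x 1 with hx1 | hx1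
  · rw [Nat.ceil_eq_zero.2 (div_nonpos_of_nonpos_of_nonneg (by linarith) hL.le), Nat.cast_zero]
    positivity
  · calc (⌈(x - 1) / L⌉₊ : ℝ) ≤ (x - 1) / L + 1 :=
          (Nat.ceil_lt_add_one (div_nonneg (by linarith) hL.le)).le
      _ ≤ x * (L⁻¹ + 1) := by
          rw [div_eq_mul_inv]
          nlinarith [inv_pos.2 hL]

section GoodLambda

variable {Ω : Type*} {m0 : MeasurableSpace Ω} {μ : Measure Ω} [IsFiniteMeasure μ]
  {𝒢 : Filtration ℝ m0} {A Ψ : ℝ → Ω → ℝ} {σ : Ω → ℝ} {R θ c ν : ℝ} {B : Set Ω}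

def incrementExceeds (A : ℝ → Ω → ℝ) (σ : Ω → ℝ) (R c : ℝ) : Set Ω :=
  {ω | ∃ u ∈ Icc (σ ω) R, c < |A u ω - A (σ ω) ω|}

def weightExceeds (Ψ : ℝ → Ω → ℝ) (σ : Ω → ℝ) (R ν : ℝ) : Set Ω :=
  {ω | ∃ u ∈ Icc (σ ω) R, ν < Ψ u ω}

lemma incrementExceeds_anti : Antitone (incrementExceeds A σ R) :=
  fun _ _ hcd _ ⟨u, hu, hdu⟩ => ⟨u, hu, hcd.trans_lt hdu⟩

/-- The hypothesis of the theorem multiplied out by `ℙ(C)`, so that null sets `C` are allowed. -/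
def TerminalGoodLambda (μ : Measure Ω) (𝒢 : Filtration ℝ m0) (A Ψ : ℝ → Ω → ℝ) (R θ : ℝ) :
    Prop :=
  ∀ (τ : Ω → ℝ) (hτ : IsStoppingTime 𝒢 fun ω => (τ ω : WithTop ℝ)), (∀ ω, τ ω ∈ Icc 0 R) →
    ∀ C : Set Ω, MeasurableSet[hτ.measurableSpace] C → ∀ ν : ℝ, 0 < ν →
      μ.real (C ∩ {ω | ν < |A R ω - A (τ ω) ω|}) ≤
        θ * μ.real C + μ.real (C ∩ weightExceeds Ψ τ R ν)

lemma terminalGoodLambda_of_div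
    (hyp : ∀ (τ : Ω → ℝ) (hτ : IsStoppingTime 𝒢 fun ω => (τ ω : WithTop ℝ)),
      (∀ ω, τ ω ∈ Icc 0 R) → ∀ C : Set Ω, MeasurableSet[hτ.measurableSpace] C → 0 < μ C →
        ∀ ν : ℝ, 0 < ν → μ.real (C ∩ {ω | ν < |A R ω - A (τ ω) ω|}) / μ.real C ≤
          θ + μ.real (C ∩ weightExceeds Ψ τ R ν) / μ.real C) :
    TerminalGoodLambda μ 𝒢 A Ψ R θ := by
  intro τ hτ hτmem C hC ν hν
  rcases eq_zero_or_pos (μ C) with hC0 | hC0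
  · simp [measureReal_def, measure_mono_null inter_subset_left hC0, hC0]
  · have hCpos : 0 < μ.real C := ENNReal.toReal_pos hC0.ne' (measure_ne_top μ C)
    have h := hyp τ hτ hτmem C hC hC0 ν hν
    rwa [div_le_iff₀ hCpos, add_mul, div_mul_cancel₀ _ hCpos.ne'] at h

variable (hA : IsStronglyProgressive 𝒢 A) (hAc : ∀ ω, Continuous fun r => A r ω)
  (hσ : IsStoppingTime 𝒢 fun ω => (σ ω : WithTop ℝ)) (hσmem : ∀ ω, σ ω ∈ Icc 0 R)
  (hB : MeasurableSet[hσ.measurableSpace] B)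
include hA hAc hσmem hB

-- If the path moves by `3ν` after `σ` but `|A_R - A_σ| ≤ ν`, then `|A_R - A_τ| ≥ 2ν` at the first
-- time `τ` it has moved by `3ν`.
theorem TerminalGoodLambda.measureReal_incrementExceeds_le
    (hgl : TerminalGoodLambda μ 𝒢 A Ψ R θ) (hθ : 0 ≤ θ) (hν : 0 < ν) :
    μ.real (B ∩ incrementExceeds A σ R (3 * ν)) ≤
      2 * θ * μ.real B + 2 * μ.real (B ∩ weightExceeds Ψ σ R ν) := by
  set τ := fun ω => exitTime (A · ω) (σ ω) R (3 * ν)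
  have hτ : IsStoppingTime 𝒢 fun ω => (τ ω : WithTop ℝ) := isStoppingTime_exitTime hA hAc hσ
  have hτσ (ω : Ω) : τ ω ∈ Icc (σ ω) R := exitTime_mem_Icc (hσmem ω).2
  set H := B ∩ {ω | 3 * ν ≤ |A (τ ω) ω - A (σ ω) ω|}
  have hH := measurableSet_inter_le_abs_sub hA hσ hτ (fun ω => (hτσ ω).1) hB (3 * ν)
  have hcover : B ∩ incrementExceeds A σ R (3 * ν) ⊆
      (B ∩ {ω | ν < |A R ω - A (σ ω) ω|}) ∪ (H ∩ {ω | ν < |A R ω - A (τ ω) ω|}) := by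
    rintro ω ⟨hωB, u, hu, hνu⟩
    have hhit : 3 * ν ≤ |A (τ ω) ω - A (σ ω) ω| :=
      le_abs_sub_exitTime (hAc ω) ⟨u, hu, hνu.le⟩
    by_cases hterm : ν < |A R ω - A (σ ω) ω|
    · exact .inl ⟨hωB, hterm⟩
    · refine .inr ⟨⟨hωB, hhit⟩, ?_⟩
      have := abs_sub_abs_le_abs_sub (A (τ ω) ω - A (σ ω) ω) (A R ω - A (σ ω) ω)
      rw [sub_sub_sub_cancel_right, abs_sub_comm (A (τ ω) ω) (A R ω)] at this
      show ν < |A R ω - A (τ ω) ω|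
      linarith
  have hweight : H ∩ weightExceeds Ψ τ R ν ⊆ B ∩ weightExceeds Ψ σ R ν :=
    fun ω ⟨hωH, u, hu, hνu⟩ => ⟨hωH.1, u, ⟨(hτσ ω).1.trans hu.1, hu.2⟩, hνu⟩
  calc μ.real (B ∩ incrementExceeds A σ R (3 * ν))
      ≤ μ.real (B ∩ {ω | ν < |A R ω - A (σ ω) ω|}) + μ.real (H ∩ {ω | ν < |A R ω - A (τ ω) ω|}) :=
        (measureReal_mono hcover).trans (measureReal_union_le _ _)
    _ ≤ (θ * μ.real B + μ.real (B ∩ weightExceeds Ψ σ R ν)) +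
          (θ * μ.real H + μ.real (H ∩ weightExceeds Ψ τ R ν)) :=
        add_le_add (hgl σ hσ hσmem B hB ν hν)
          (hgl τ hτ (fun ω => Icc_subset_Icc_left (hσmem ω).1 (hτσ ω)) H hH ν hν)
    _ ≤ 2 * θ * μ.real B + 2 * μ.real (B ∩ weightExceeds Ψ σ R ν) := by
        have := measureReal_mono (μ := μ) (inter_subset_left : H ⊆ B)
        have := measureReal_mono (μ := μ) hweight
        nlinarith

theorem TerminalGoodLambda.measureReal_incrementExceeds_add_le
    (hgl : TerminalGoodLambda μ 𝒢 A Ψ R θ) (hθ : 0 ≤ θ) (hc : 0 ≤ c) (hν : 0 < ν) :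
    μ.real (B ∩ incrementExceeds A σ R (c + 4 * ν)) ≤
      2 * θ * μ.real (B ∩ incrementExceeds A σ R c) +
        2 * μ.real (B ∩ weightExceeds Ψ σ R ν) := by
  set τ := fun ω => exitTime (A · ω) (σ ω) R (c + ν)
  have hτ : IsStoppingTime 𝒢 fun ω => (τ ω : WithTop ℝ) := isStoppingTime_exitTime hA hAc hσ
  have hτσ (ω : Ω) : τ ω ∈ Icc (σ ω) R := exitTime_mem_Icc (hσmem ω).2
  set H := B ∩ {ω | c + ν ≤ |A (τ ω) ω - A (σ ω) ω|}
  have hH := measurableSet_inter_le_abs_sub hA hσ hτ (fun ω => (hτσ ω).1) hB (c + ν)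
  have hcover : B ∩ incrementExceeds A σ R (c + 4 * ν) ⊆ H ∩ incrementExceeds A τ R (3 * ν) := by
    rintro ω ⟨hωB, u, hu, hcu⟩
    have hhit : ∃ u ∈ Icc (σ ω) R, c + ν ≤ |A u ω - A (σ ω) ω| := ⟨u, hu, by linarith⟩
    have hτu : τ ω ≤ u := exitTime_le hu (by linarith)
    have hτ_le : |A (τ ω) ω - A (σ ω) ω| ≤ c + ν :=
      abs_sub_exitTime_le (hAc ω) (by linarith) (hσmem ω).2
    have := abs_sub_abs_le_abs_sub (A u ω - A (σ ω) ω) (A (τ ω) ω - A (σ ω) ω)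
    rw [sub_sub_sub_cancel_right] at this
    exact ⟨⟨hωB, le_abs_sub_exitTime (hAc ω) hhit⟩, u, ⟨hτu, hu.2⟩, by linarith⟩
  have hH_sub : H ⊆ B ∩ incrementExceeds A σ R c :=
    fun ω ⟨hωB, hhit⟩ => ⟨hωB, τ ω, hτσ ω, (lt_add_of_pos_right c hν).trans_le hhit⟩
  have hweight : H ∩ weightExceeds Ψ τ R ν ⊆ B ∩ weightExceeds Ψ σ R ν :=
    fun ω ⟨hωH, u, hu, hνu⟩ => ⟨hωH.1, u, ⟨(hτσ ω).1.trans hu.1, hu.2⟩, hνu⟩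
  calc μ.real (B ∩ incrementExceeds A σ R (c + 4 * ν))
      ≤ μ.real (H ∩ incrementExceeds A τ R (3 * ν)) := measureReal_mono hcover
    _ ≤ 2 * θ * μ.real H + 2 * μ.real (H ∩ weightExceeds Ψ τ R ν) :=
        hgl.measureReal_incrementExceeds_le hA hAc hτ
          (fun ω => Icc_subset_Icc_left (hσmem ω).1 (hτσ ω)) hH hθ hν
    _ ≤ _ := by gcongr <;> finiteness

theorem TerminalGoodLambda.measureReal_incrementExceeds_add_mul_le
    (hgl : TerminalGoodLambda μ 𝒢 A Ψ R θ) (hθ0 : 0 ≤ θ) (hθ : θ < 1 / 2) (hc : 0 ≤ c)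
    (hν : 0 < ν) (k : ℕ) :
    μ.real (B ∩ incrementExceeds A σ R (c + 4 * k * ν)) ≤
      (2 * θ) ^ k * μ.real (B ∩ incrementExceeds A σ R c) +
        2 / (1 - 2 * θ) * μ.real (B ∩ weightExceeds Ψ σ R ν) := by
  have hstep (j : ℕ) : μ.real (B ∩ incrementExceeds A σ R (c + 4 * (j + 1 : ℕ) * ν)) ≤
      2 * θ * μ.real (B ∩ incrementExceeds A σ R (c + 4 * j * ν)) +
        2 * μ.real (B ∩ weightExceeds Ψ σ R ν) := by
    rw [show c + 4 * ((j + 1 : ℕ) : ℝ) * ν = c + 4 * j * ν + 4 * ν by push_cast; ring]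
    exact hgl.measureReal_incrementExceeds_add_le hA hAc hσ hσmem hB hθ0 (by positivity) hν
  simpa [mul_div_right_comm] using le_pow_mul_add_div_of_le_mul_add
    (p := fun j : ℕ => μ.real (B ∩ incrementExceeds A σ R (c + 4 * j * ν)))
    (by positivity) (by linarith) (by positivity) hstep k

end GoodLambda

theorem weighted_good_lambda_general
    {Ω : Type*} {m0 : MeasurableSpace Ω} {μ : Measure Ω} [IsProbabilityMeasure μ]
    (𝒢 : Filtration ℝ m0) (R : ℝ)
    (A : ℝ → Ω → ℝ) (hAadapted : Adapted 𝒢 A)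
    (hAcont : ∀ ω, Continuous fun r => A r ω)
    (Ψ : ℝ → Ω → ℝ)
    (θ : ℝ) (hθ0 : 0 < θ) (hθ : θ < 1 / 2)
    (hyp : ∀ (σ : Ω → ℝ) (hσ : IsStoppingTime 𝒢 (fun ω => (σ ω : WithTop ℝ))), (∀ ω, σ ω ∈ Set.Icc 0 R) →
      ∀ B : Set Ω, MeasurableSet[hσ.measurableSpace] B → 0 < μ B → ∀ ν : ℝ, 0 < ν →
        (μ (B ∩ {ω | ν < |A R ω - A (σ ω) ω|})).toReal / (μ B).toReal ≤
          θ + (μ (B ∩ {ω | ∃ u ∈ Set.Icc (σ ω) R, ν < Ψ u ω})).toReal / (μ B).toReal) :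
    ∃ a > (0 : ℝ), ∃ α > (0 : ℝ),
      ∀ (σ : Ω → ℝ) (hσ : IsStoppingTime 𝒢 (fun ω => (σ ω : WithTop ℝ))), (∀ ω, σ ω ∈ Set.Icc 0 R) →
      ∀ B : Set Ω, MeasurableSet[hσ.measurableSpace] B → 0 < μ B →
      ∀ lam mu ν : ℝ, 0 < lam → 0 < mu → 0 < ν →
        (μ (B ∩ {ω | ∃ u ∈ Set.Icc (σ ω) R,
            lam + a * mu * ν < |A u ω - A (σ ω) ω|})).toReal / (μ B).toReal ≤
          Real.exp (1 - mu) *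
            ((μ (B ∩ {ω | ∃ u ∈ Set.Icc (σ ω) R,
              lam < |A u ω - A (σ ω) ω|})).toReal / (μ B).toReal) +
          α * (μ (B ∩ {ω | ∃ u ∈ Set.Icc (σ ω) R, ν < Ψ u ω})).toReal / (μ B).toReal := by
  have hA : IsStronglyProgressive 𝒢 A := StronglyAdapted.isStronglyProgressive_of_continuous
    (fun r => (hAadapted r).stronglyMeasurable) hAcont
  have hgl : TerminalGoodLambda μ 𝒢 A Ψ R θ := terminalGoodLambda_of_div hyp
  have hL : 0 < -Real.log (2 * θ) := neg_pos.2 (Real.log_neg (by linarith) (by linarith))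
  refine ⟨4 * ((-Real.log (2 * θ))⁻¹ + 1), by positivity, 2 / (1 - 2 * θ),
    div_pos two_pos (by linarith), ?_⟩
  intro σ hσ hσmem B hB _ lam mu ν hlam hmu hν
  obtain ⟨k, hkL, hk⟩ := exists_nat_sub_one_le_mul_and_le hL hmu
  have hpow : (2 * θ) ^ k ≤ Real.exp (1 - mu) := by
    rw [← Real.exp_log (pow_pos (by linarith) k), Real.log_pow]
    exact Real.exp_le_exp.2 (by linarith)
  have hmono : lam + 4 * k * ν ≤ lam + 4 * ((-Real.log (2 * θ))⁻¹ + 1) * mu * ν := by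
    nlinarith
  have hbound := (measureReal_mono (μ := μ) (inter_subset_inter_right B
    (incrementExceeds_anti (A := A) (σ := σ) (R := R) hmono))).trans
    (hgl.measureReal_incrementExceeds_add_mul_le hA hAcont hσ hσmem hB hθ0.le hθ hlam.le hν k)
  rw [mul_div_assoc', ← add_div]
  exact div_le_div_of_nonneg_right (hbound.trans (add_le_add
    (mul_le_mul_of_nonneg_right hpow measureReal_nonneg) le_rfl)) measureReal_nonneg

/-- Good-λ / weighted iteration theorem ([Geiss, weighted BMO]): Let `A` be continuous
adapted with `A₀ = 0` and `Ψ` càdlàg adapted and positive on `[0,R]`. If there is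
`θ ∈ (0,1/2)` such that
`ℙ_B(|A_R − A_σ| > ν) ≤ θ + W_Ψ(B,ν;σ)/ℙ(B)` for all `ν > 0`, stopping times `σ` with
values in `[0,R]` and `B ∈ 𝒢_σ` of positive measure, where
`W_Ψ(B,ν;σ) = ℙ(B ∩ {sup_{u∈[σ,R]} Ψ_u > ν})`, then there are constants `a, α > 0`
(depending only on `θ`) such that
`ℙ_B(sup_{u∈[σ,R]} |A_u − A_σ| > λ + aμν)
   ≤ e^{1−μ}·ℙ_B(sup_{u∈[σ,R]} |A_u − A_σ| > λ) + α·W_Ψ(B,ν;σ)/ℙ(B)`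
for all `λ, μ, ν > 0`. (Here `sup_{u∈[σ,R]} f_u > c` is expressed as `∃ u ∈ [σ,R], f_u > c`.) -/
theorem weighted_good_lambda
    {Ω : Type*} {m0 : MeasurableSpace Ω} {μ : Measure Ω} [IsProbabilityMeasure μ]
    (𝒢 : Filtration ℝ m0) (R : ℝ) (hR : 0 < R)
    (A : ℝ → Ω → ℝ) (hAadapted : Adapted 𝒢 A)
    (hAcont : ∀ ω, Continuous fun r => A r ω) (hA0 : ∀ ω, A 0 ω = 0)
    (Ψ : ℝ → Ω → ℝ) (hΨadapted : Adapted 𝒢 Ψ)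
    (hΨpos : ∀ r ω, 0 < Ψ r ω)
    (hΨright : ∀ ω r, ContinuousWithinAt (fun u => Ψ u ω) (Set.Ici r) r)
    (hΨleft : ∀ ω r, ∃ l : ℝ, Tendsto (fun u => Ψ u ω) (nhdsWithin r (Set.Iio r)) (nhds l))
    (θ : ℝ) (hθ0 : 0 < θ) (hθ : θ < 1 / 2)
    (hyp : ∀ (σ : Ω → ℝ) (hσ : IsStoppingTime 𝒢 (fun ω => (σ ω : WithTop ℝ))), (∀ ω, σ ω ∈ Set.Icc 0 R) →
      ∀ B : Set Ω, MeasurableSet[hσ.measurableSpace] B → 0 < μ B → ∀ ν : ℝ, 0 < ν →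
        (μ (B ∩ {ω | ν < |A R ω - A (σ ω) ω|})).toReal / (μ B).toReal ≤
          θ + (μ (B ∩ {ω | ∃ u ∈ Set.Icc (σ ω) R, ν < Ψ u ω})).toReal / (μ B).toReal) :
    ∃ a > (0 : ℝ), ∃ α > (0 : ℝ),
      ∀ (σ : Ω → ℝ) (hσ : IsStoppingTime 𝒢 (fun ω => (σ ω : WithTop ℝ))), (∀ ω, σ ω ∈ Set.Icc 0 R) →
      ∀ B : Set Ω, MeasurableSet[hσ.measurableSpace] B → 0 < μ B →
      ∀ lam mu ν : ℝ, 0 < lam → 0 < mu → 0 < ν →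
        (μ (B ∩ {ω | ∃ u ∈ Set.Icc (σ ω) R,
            lam + a * mu * ν < |A u ω - A (σ ω) ω|})).toReal / (μ B).toReal ≤
          Real.exp (1 - mu) *
            ((μ (B ∩ {ω | ∃ u ∈ Set.Icc (σ ω) R,
              lam < |A u ω - A (σ ω) ω|})).toReal / (μ B).toReal) +
          α * (μ (B ∩ {ω | ∃ u ∈ Set.Icc (σ ω) R, ν < Ψ u ω})).toReal / (μ B).toReal :=
  weighted_good_lambda_general 𝒢 R A hAadapted hAcont Ψ θ hθ0 hθ hyp
end

section
/- Iteration step in the good-λ argument: under the hypothesis ℙ_B(g > λ + ν) ≤ [η + V(g>λ, ν)]·ℙ_B(g > λ) for all λ,ν > 0, where η ∈ (0,1) and V is monotone in the sense that V(C₁,ν)ℙ_B(C₁) ≤ V(C₂,ν)ℙ_B(C₂) for C₁ ⊆ C₂, one obtains ℙ_B(g > λ + Nν) ≤ [η^N + V(g>λ,ν)·∑_{k=1}^N η^{k−1}]·ℙ_B(g > λ) for every N ∈ ℕ. -/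
open MeasureTheory

/-! The tails `a n = ℙ_B(g > λ + nν)` satisfy `a (n+1) ≤ η a n + w` with the constant
`w = V(g>λ, ν) ℙ_B(g > λ)`: apply the one-step estimate at level `λ + nν` and use the monotonicity
of `C ↦ V(C, ν) ℙ_B(C)` to replace its error term by its value at `λ`. Unrolling this affine
recursion gives the geometric bound. -/

theorem le_pow_mul_add_mul_geom_sum {a : ℕ → ℝ} {η w : ℝ} (hη : 0 ≤ η)
    (h : ∀ n, a (n + 1) ≤ η * a n + w) :
    ∀ N, a N ≤ η ^ N * a 0 + w * ∑ k ∈ Finset.range N, η ^ k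
  | 0 => by simp
  | N + 1 => calc
      a (N + 1) ≤ η * a N + w := h N
      _ ≤ η * (η ^ N * a 0 + w * ∑ k ∈ Finset.range N, η ^ k) + w := by
        gcongr; exact le_pow_mul_add_mul_geom_sum hη h N
      _ = η ^ (N + 1) * a 0 + w * ∑ k ∈ Finset.range (N + 1), η ^ k := by
        rw [geom_sum_succ]; ring

theorem good_lambda_iteration_general
    {Ω : Type*} [MeasurableSpace Ω] (PB : Measure Ω)
    (g : Ω → ℝ)
    (η : ℝ) (hη0 : 0 < η)
    (V : Set Ω → ℝ → ℝ)
    (hVmono : ∀ (C₁ C₂ : Set Ω) (ν : ℝ), C₁ ⊆ C₂ →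
      V C₁ ν * (PB C₁).toReal ≤ V C₂ ν * (PB C₂).toReal)
    (hstep : ∀ lam ν : ℝ, 0 < lam → 0 < ν →
      (PB {ω | lam + ν < g ω}).toReal ≤
        (η + V {ω | lam < g ω} ν) * (PB {ω | lam < g ω}).toReal) :
    ∀ (N : ℕ) (lam ν : ℝ), 0 < lam → 0 < ν →
      (PB {ω | lam + N * ν < g ω}).toReal ≤
        (η ^ N + V {ω | lam < g ω} ν * ∑ k ∈ Finset.range N, η ^ k) *
          (PB {ω | lam < g ω}).toReal := by
  intro N lam ν hlam hν
  set tail : ℝ → ℝ := fun t ↦ (PB {ω | t < g ω}).toReal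
  have hsub (n : ℕ) : {ω | lam + n * ν < g ω} ⊆ {ω | lam < g ω} := fun ω hω ↦ by
    have : 0 ≤ (n : ℝ) * ν := by positivity
    simp only [Set.mem_ofPred_eq] at hω ⊢
    linarith
  have hrec (n : ℕ) : tail (lam + (n + 1 : ℕ) * ν) ≤
      η * tail (lam + n * ν) + V {ω | lam < g ω} ν * tail lam := calc
    tail (lam + (n + 1 : ℕ) * ν) = tail (lam + n * ν + ν) := by push_cast; ring_nf
    _ ≤ (η + V {ω | lam + n * ν < g ω} ν) * tail (lam + n * ν) :=
      hstep _ ν (by positivity) hν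
    _ = η * tail (lam + n * ν) + V {ω | lam + n * ν < g ω} ν * tail (lam + n * ν) := by ring
    _ ≤ η * tail (lam + n * ν) + V {ω | lam < g ω} ν * tail lam :=
      add_le_add_right (hVmono _ _ ν (hsub n)) _
  refine (le_pow_mul_add_mul_geom_sum (a := fun n : ℕ ↦ tail (lam + n * ν))
    hη0.le hrec N).trans_eq ?_
  simp only [Nat.cast_zero, zero_mul, add_zero]
  ring

/-- Iteration step in the good-λ argument: from the one-step estimate
`ℙ_B(g > λ + ν) ≤ [η + V(g>λ, ν)]·ℙ_B(g > λ)` (for all `λ, ν > 0`), with `η ∈ (0,1)`,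
`V ≥ 0` monotone in the sense `C₁ ⊆ C₂ → V(C₁,ν)ℙ_B(C₁) ≤ V(C₂,ν)ℙ_B(C₂)`, one deduces
`ℙ_B(g > λ + Nν) ≤ [η^N + V(g>λ,ν)·∑_{k=1}^N η^{k−1}]·ℙ_B(g > λ)` for every `N ∈ ℕ`. -/
theorem good_lambda_iteration
    {Ω : Type*} [MeasurableSpace Ω] (PB : Measure Ω) [IsProbabilityMeasure PB]
    (g : Ω → ℝ) (hg : ∀ ω, 0 ≤ g ω)
    (η : ℝ) (hη0 : 0 < η) (hη1 : η < 1)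
    (V : Set Ω → ℝ → ℝ) (hV0 : ∀ C ν, 0 ≤ V C ν)
    (hVmono : ∀ (C₁ C₂ : Set Ω) (ν : ℝ), C₁ ⊆ C₂ →
      V C₁ ν * (PB C₁).toReal ≤ V C₂ ν * (PB C₂).toReal)
    (hstep : ∀ lam ν : ℝ, 0 < lam → 0 < ν →
      (PB {ω | lam + ν < g ω}).toReal ≤
        (η + V {ω | lam < g ω} ν) * (PB {ω | lam < g ω}).toReal) :
    ∀ (N : ℕ) (lam ν : ℝ), 0 < lam → 0 < ν →
      (PB {ω | lam + N * ν < g ω}).toReal ≤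
        (η ^ N + V {ω | lam < g ω} ν * ∑ k ∈ Finset.range N, η ^ k) *
          (PB {ω | lam < g ω}).toReal :=
  good_lambda_iteration_general PB g η hη0 V hVmono hstep
end

section
/- Continuous modification of conditional expectations: Let (f(x))_{x∈𝕏} be a stochastic process on a complete metric, locally σ-compact space 𝕏, continuous in x for every ω, with (f(x))_{x∈K} uniformly integrable for every compact K ⊆ 𝕏, and suppose |f(ω,x₀) − f(ω,x₁)| ≤ H(x₀,x₁) for all ω, x₀, x₁, where H : 𝕏×𝕏 → [0,∞) is continuous with H(x,x) = 0. Then for any sub-σ-algebra 𝒢 there exists a (unique up to indistinguishability) 𝒢-measurable process (g(x))_{x∈𝕏}, continuous in x for every ω, such that ℙ(E[f(x)|𝒢] = g(x)) = 1 for every x ∈ 𝕏. -/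
/-!
For fixed `x, y` the bound `|f x - f y| ≤ H x y` passes to conditional expectations almost
surely. Off a null set it then holds simultaneously on a countable dense set `D`, where it makes
`x ↦ E[f x | 𝒢]` uniformly controlled by `H`; taking limits along sequences from `D` gives a
process that is continuous for every `ω`, still `𝒢`-measurable, and equal to `E[f x | 𝒢]` almost
surely because `H (u n) x → 0`. Two continuous processes that agree almost surely at each point of
`D` are indistinguishable.
-/

open MeasureTheory Filter Topology

section Modulus

variable {X : Type*} [TopologicalSpace X] {H : X → X → ℝ}

theorem tendsto_modulus_nhds_zero (hHcont : Continuous fun p : X × X => H p.1 p.2)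
    (hHdiag : ∀ x, H x x = 0) {ι : Type*} {l : Filter ι} {u v : ι → X} {x : X}
    (hu : Tendsto u l (𝓝 x)) (hv : Tendsto v l (𝓝 x)) :
    Tendsto (fun i => H (u i) (v i)) l (𝓝 0) := by
  simpa only [hHdiag, Function.comp_def] using (hHcont.tendsto (x, x)).comp (hu.prodMk_nhds hv)

theorem continuous_of_abs_sub_le_modulus (hHcont : Continuous fun p : X × X => H p.1 p.2)
    (hHdiag : ∀ x, H x x = 0) {φ : X → ℝ} (hφ : ∀ x y, |φ x - φ y| ≤ H x y) :
    Continuous φ := by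
  refine continuous_iff_continuousAt.2 fun x => tendsto_iff_norm_sub_tendsto_zero.2 ?_
  exact squeeze_zero (fun _ => norm_nonneg _) (fun y => (Real.norm_eq_abs _).trans_le (hφ y x))
    (tendsto_modulus_nhds_zero hHcont hHdiag tendsto_id tendsto_const_nhds)

variable {φ : X → ℝ} {s : Set X}

theorem cauchySeq_comp_of_abs_sub_le_modulus (hHcont : Continuous fun p : X × X => H p.1 p.2)
    (hHdiag : ∀ x, H x x = 0) (hφ : ∀ a ∈ s, ∀ b ∈ s, |φ a - φ b| ≤ H a b)
    {u : ℕ → X} {x : X} (hus : ∀ n, u n ∈ s) (hux : Tendsto u atTop (𝓝 x)) :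
    CauchySeq fun n => φ (u n) := by
  refine cauchySeq_iff_tendsto_dist_atTop_0.2 <| squeeze_zero (fun _ => dist_nonneg)
    (fun p => (Real.dist_eq _ _).trans_le (hφ _ (hus p.1) _ (hus p.2))) ?_
  rw [← prod_atTop_atTop_eq]
  exact tendsto_modulus_nhds_zero hHcont hHdiag (hux.comp tendsto_fst) (hux.comp tendsto_snd)

theorem abs_sub_le_modulus_of_tendsto (hHcont : Continuous fun p : X × X => H p.1 p.2)
    (hφ : ∀ a ∈ s, ∀ b ∈ s, |φ a - φ b| ≤ H a b) {u v : ℕ → X} {x y : X} {a b : ℝ}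
    (hus : ∀ n, u n ∈ s) (hvs : ∀ n, v n ∈ s) (hux : Tendsto u atTop (𝓝 x))
    (hvy : Tendsto v atTop (𝓝 y)) (ha : Tendsto (fun n => φ (u n)) atTop (𝓝 a))
    (hb : Tendsto (fun n => φ (v n)) atTop (𝓝 b)) :
    |a - b| ≤ H x y :=
  le_of_tendsto_of_tendsto' (ha.sub hb).abs ((hHcont.tendsto (x, y)).comp (hux.prodMk_nhds hvy))
    fun n => hφ _ (hus n) _ (hvs n)

theorem eq_of_tendsto_of_abs_sub_le_modulus (hHcont : Continuous fun p : X × X => H p.1 p.2)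
    (hHdiag : ∀ x, H x x = 0) {u : ℕ → X} {x : X} {a c : ℝ} (hux : Tendsto u atTop (𝓝 x))
    (ha : Tendsto (fun n => φ (u n)) atTop (𝓝 a)) (hc : ∀ n, |φ (u n) - c| ≤ H (u n) x) :
    a = c := by
  refine tendsto_nhds_unique ha (tendsto_iff_norm_sub_tendsto_zero.2 ?_)
  exact squeeze_zero (fun _ => norm_nonneg _) (fun n => (Real.norm_eq_abs _).trans_le (hc n))
    (tendsto_modulus_nhds_zero hHcont hHdiag hux tendsto_const_nhds)

end Modulus

section Modification

variable {Ω X : Type*} {m m0 : MeasurableSpace Ω} {μ : Measure Ω}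

theorem ae_abs_condExp_sub_condExp_le {f g : Ω → ℝ} {c : ℝ} (hf : Integrable f μ)
    (hg : Integrable g μ) (hfg : ∀ᵐ ω ∂μ, |f ω - g ω| ≤ c) :
    ∀ᵐ ω ∂μ, |μ[f | m] ω - μ[g | m] ω| ≤ c := by
  filter_upwards [condExp_sub hf hg m,
    ae_bdd_abs_condExp_of_ae_bdd_abs (m := m) (f := f - g) hfg] with ω hsub hbdd
  rwa [hsub, Pi.sub_apply] at hbdd

theorem ae_forall_eq_of_continuous_of_ae_eq [TopologicalSpace X]
    [TopologicalSpace.SeparableSpace X] {Y : Type*} [TopologicalSpace Y] [T2Space Y]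
    {g g' : X → Ω → Y} (hg : ∀ ω, Continuous fun x => g x ω)
    (hg' : ∀ ω, Continuous fun x => g' x ω) (hgg' : ∀ x, g x =ᵐ[μ] g' x) :
    ∀ᵐ ω ∂μ, ∀ x, g x ω = g' x ω := by
  obtain ⟨D, hD, hDdense⟩ := TopologicalSpace.exists_countable_dense X
  filter_upwards [(ae_ball_iff hD).2 fun d _ => hgg' d] with ω hω
  exact congrFun (Continuous.ext_on hDdense (hg ω) (hg' ω) hω)

theorem exists_continuous_modification_of_ae_abs_sub_le [PseudoMetricSpace X]
    [TopologicalSpace.SeparableSpace X] {F : X → Ω → ℝ} (hF : ∀ x, StronglyMeasurable[m] (F x))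
    {H : X → X → ℝ} (hHcont : Continuous fun p : X × X => H p.1 p.2) (hHdiag : ∀ x, H x x = 0)
    (hFH : ∀ x y, ∀ᵐ ω ∂μ, |F x ω - F y ω| ≤ H x y) :
    ∃ g : X → Ω → ℝ, (∀ ω, Continuous fun x => g x ω) ∧
      (∀ x, StronglyMeasurable[m] (g x)) ∧ ∀ x, g x =ᵐ[μ] F x := by
  obtain ⟨D, hD, hDdense⟩ := TopologicalSpace.exists_countable_dense X
  choose u huD hux using fun x => mem_closure_iff_seq_limit.1 (hDdense x)
  set N : Set Ω := {ω | ∀ d ∈ D, ∀ d' ∈ D, |F d ω - F d' ω| ≤ H d d'}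
  have hN : MeasurableSet[m] N := by
    simp only [N, Set.ofPred_forall]
    exact .biInter hD fun d _ => .biInter hD fun d' _ =>
      ((hF d).sub (hF d')).norm.measurableSet_le stronglyMeasurable_const
  have hN_ae : ∀ᵐ ω ∂μ, ω ∈ N :=
    (ae_ball_iff hD).2 fun d _ => (ae_ball_iff hD).2 fun d' _ => hFH d d'
  set g : X → Ω → ℝ := fun x => N.indicator fun ω => limUnder atTop fun n => F (u x n) ω
  have hg_lim : ∀ x, ∀ ω ∈ N, Tendsto (fun n => F (u x n) ω) atTop (𝓝 (g x ω)) := by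
    intro x ω hω
    simp only [g, Set.indicator_of_mem hω]
    exact (cauchySeq_comp_of_abs_sub_le_modulus hHcont hHdiag hω (huD x) (hux x)).tendsto_limUnder
  refine ⟨g, fun ω => ?_, fun x => ?_, fun x => ?_⟩
  · by_cases hω : ω ∈ N
    · exact continuous_of_abs_sub_le_modulus hHcont hHdiag fun x y =>
        abs_sub_le_modulus_of_tendsto hHcont hω (huD x) (huD y) (hux x) (hux y)
          (hg_lim x ω hω) (hg_lim y ω hω)
    · simp only [g, Set.indicator_of_notMem hω, continuous_const]
  · refine stronglyMeasurable_of_tendsto atTop (f := fun n => N.indicator (F (u x n)))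
      (fun n => (hF _).indicator hN) (tendsto_pi_nhds.2 fun ω => ?_)
    by_cases hω : ω ∈ N
    · simpa only [Set.indicator_of_mem hω] using hg_lim x ω hω
    · simp only [g, Set.indicator_of_notMem hω, tendsto_const_nhds]
  · filter_upwards [ae_all_iff.2 fun n => hFH (u x n) x, hN_ae] with ω hω hωN
    exact eq_of_tendsto_of_abs_sub_le_modulus hHcont hHdiag (φ := (F · ω)) (hux x)
      (hg_lim x ω hωN) hω

end Modification

theorem continuous_modification_condexp_general
    {Ω : Type*} {m0 : MeasurableSpace Ω} {μ : Measure Ω}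
    {X : Type*} [MetricSpace X]
    (K : ℕ → Set X) (hKcompact : ∀ n, IsCompact (K n))
    (hKcover : (⋃ n, interior (K n)) = Set.univ)
    (f : X → Ω → ℝ)
    (hfmeas : ∀ x, Integrable (f x) μ)
    (H : X → X → ℝ) (hHcont : Continuous fun p : X × X => H p.1 p.2)
    (hHdiag : ∀ x, H x x = 0)
    (hHdom : ∀ ω x₀ x₁, |f x₀ ω - f x₁ ω| ≤ H x₀ x₁)
    (m : MeasurableSpace Ω) :
    (∃ g : X → Ω → ℝ,
      (∀ ω, Continuous fun x => g x ω) ∧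
      (∀ x, StronglyMeasurable[m] (g x)) ∧
      (∀ x, g x =ᵐ[μ] μ[f x | m]) ∧
      (∀ g' : X → Ω → ℝ,
        (∀ ω, Continuous fun x => g' x ω) →
        (∀ x, StronglyMeasurable[m] (g' x)) →
        (∀ x, g' x =ᵐ[μ] μ[f x | m]) →
        ∀ᵐ ω ∂μ, ∀ x, g x ω = g' x ω)) := by
  -- a σ-compact metric space is second countable, hence separable
  have : SigmaCompactSpace X :=
    ⟨K, hKcompact, Set.univ_subset_iff.1 (hKcover ▸ Set.iUnion_mono fun n => interior_subset)⟩
  obtain ⟨g, hg_cont, hg_meas, hg_ae⟩ :=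
    exists_continuous_modification_of_ae_abs_sub_le (F := fun x => μ[f x | m]) (μ := μ)
      (fun _ => stronglyMeasurable_condExp) hHcont hHdiag fun x y =>
        ae_abs_condExp_sub_condExp_le (hfmeas x) (hfmeas y) (.of_forall (hHdom · x y))
  exact ⟨g, hg_cont, hg_meas, hg_ae, fun g' hg'_cont _ hg'_ae =>
    ae_forall_eq_of_continuous_of_ae_eq hg_cont hg'_cont fun x => (hg_ae x).trans (hg'_ae x).symm⟩

/-- Continuous modification of conditional expectations: let `(f(x))_{x∈𝕏}` be a stochastic
process on a complete, locally σ-compact metric space `𝕏`, continuous in `x` for every `ω`,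
uniformly integrable on every compact `K ⊆ 𝕏`, with increments dominated by a continuous
modulus `H` vanishing on the diagonal. Then for every sub-σ-algebra `𝒢` there is a process
`(g(x))_{x∈𝕏}`, continuous in `x` for every `ω`, `𝒢`-measurable in `ω` for every `x`, with
`ℙ(E[f(x)|𝒢] = g(x)) = 1` for every `x`, and `g` is unique up to indistinguishability. -/
theorem continuous_modification_condexp
    {Ω : Type*} {m0 : MeasurableSpace Ω} {μ : Measure Ω} [IsProbabilityMeasure μ]
    {X : Type*} [MetricSpace X] [CompleteSpace X]
    (K : ℕ → Set X) (hKcompact : ∀ n, IsCompact (K n)) (hKmono : Monotone K)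
    (hKcover : (⋃ n, interior (K n)) = Set.univ)
    (f : X → Ω → ℝ)
    (hfcont : ∀ ω, Continuous fun x => f x ω)
    (hfmeas : ∀ x, Integrable (f x) μ)
    (hfUI : ∀ C : Set X, IsCompact C → UnifIntegrable (fun x : C => f x) 1 μ)
    (H : X → X → ℝ) (hHcont : Continuous fun p : X × X => H p.1 p.2)
    (hHnonneg : ∀ x y, 0 ≤ H x y) (hHdiag : ∀ x, H x x = 0)
    (hHdom : ∀ ω x₀ x₁, |f x₀ ω - f x₁ ω| ≤ H x₀ x₁)
    (m : MeasurableSpace Ω) (hm : m ≤ m0) :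
    (∃ g : X → Ω → ℝ,
      (∀ ω, Continuous fun x => g x ω) ∧
      (∀ x, StronglyMeasurable[m] (g x)) ∧
      (∀ x, g x =ᵐ[μ] μ[f x | m]) ∧
      (∀ g' : X → Ω → ℝ,
        (∀ ω, Continuous fun x => g' x ω) →
        (∀ x, StronglyMeasurable[m] (g' x)) →
        (∀ x, g' x =ᵐ[μ] μ[f x | m]) →
        ∀ᵐ ω ∂μ, ∀ x, g x ω = g' x ω)) :=
  continuous_modification_condexp_general (m0 := m0) K hKcompact hKcover f hfmeas H hHcont hHdiag
    hHdom m
end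

section
/- If σ : Ω → [0,T] is a stopping time for the filtration (𝒢_r) generated by W⁰ (augmented), then for each r ∈ [0,T] the event {σ ≤ r}, viewed after the decoupling operation (which replaces the Brownian increments on (s,t] by independent ones while preserving joint distributions), yields that the decoupled random variable σ^{(s,t]} admits a representative that is a stopping time for the filtration generated by W^{(s,t]}. -/
open MeasureTheory

/-! The event `{σ ≤ r}` is encoded by the `ℱ_r`-measurable variable `1_{σ ≤ r}`. Decoupling
commutes with the Borel map `x ↦ 1_{x ≤ r}`, so `1_{Dσ ≤ r}` is a.e. equal to an
`ℱ_r^{(s,t]}`-measurable variable; as `ℱ_r^{(s,t]}` contains the null sets, `{Dσ ≤ r}` is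
`ℱ_r^{(s,t]}`-measurable, and `Dσ` itself is the required representative. -/

theorem MeasurableSet.of_ae_eq_of_null {Ω : Type*} {m m0 : MeasurableSpace Ω} {μ : Measure[m0] Ω}
    (hnull : ∀ N, MeasurableSet N → μ N = 0 → MeasurableSet[m] N) (hm : m ≤ m0)
    {s t : Set Ω} (hs : MeasurableSet s) (ht : MeasurableSet[m] t) (hst : s =ᵐ[μ] t) :
    MeasurableSet[m] s := by
  rw [← symmDiff_symmDiff_cancel_left t s]
  exact ht.symmDiff (hnull _ ((hm t ht).symmDiff hs) (measure_symmDiff_eq_zero_iff.2 hst.symm))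

theorem apply_indicator_preimage_ae_eq {Ω : Type*} {m0 : MeasurableSpace Ω}
    {μ : Measure Ω} {D : (Ω → ℝ) → (Ω → ℝ)}
    (hDborel : ∀ (n : ℕ) (f : Fin n → Ω → ℝ) (g : (Fin n → ℝ) → ℝ),
      (∀ i, Measurable (f i)) → Measurable g →
      D (fun ω => g (fun i => f i ω)) =ᵐ[μ] fun ω => g (fun i => D (f i) ω))
    {f : Ω → ℝ} (hf : Measurable f) {B : Set ℝ} (hB : MeasurableSet B) :
    D ((f ⁻¹' B).indicator 1) =ᵐ[μ] (D f ⁻¹' B).indicator 1 := by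
  have hg : Measurable fun v : Fin 1 → ℝ => B.indicator (1 : ℝ → ℝ) (v 0) :=
    (measurable_one.indicator hB).comp (measurable_pi_apply 0)
  simpa only [← Set.indicator_comp_right, Pi.one_comp]
    using hDborel 1 (fun _ => f) _ (fun _ => hf) hg

theorem Set.indicator_one_preimage_one {α M₀ : Type*} [MulZeroOneClass M₀] [Nontrivial M₀]
    (s : Set α) : s.indicator (1 : α → M₀) ⁻¹' {1} = s := by
  ext; exact Set.indicator_eq_one_iff_mem M₀

theorem decoupled_stopping_time_general
    {Ω : Type*} {m0 : MeasurableSpace Ω} {μ : Measure Ω}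
    (F F' : Filtration ℝ m0)
    (D : (Ω → ℝ) → (Ω → ℝ))
    (hDmeas : ∀ f : Ω → ℝ, Measurable f → Measurable (D f))
    (hDborel : ∀ (n : ℕ) (f : Fin n → Ω → ℝ) (g : (Fin n → ℝ) → ℝ),
      (∀ i, Measurable (f i)) → Measurable g →
      D (fun ω => g (fun i => f i ω)) =ᵐ[μ] fun ω => g (fun i => D (f i) ω))
    (hDadapted : ∀ (r : ℝ) (f : Ω → ℝ), StronglyMeasurable[F r] f →
      ∃ g : Ω → ℝ, StronglyMeasurable[F' r] g ∧ D f =ᵐ[μ] g)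
    (hF'complete : ∀ (r : ℝ) (N : Set Ω), MeasurableSet N → μ N = 0 →
      MeasurableSet[F' r] N)
    (σ : Ω → ℝ) (hσ : IsStoppingTime F (fun ω => (σ ω : WithTop ℝ))) :
    ∃ σ' : Ω → ℝ, σ' =ᵐ[μ] D σ ∧ IsStoppingTime F' (fun ω => (σ' ω : WithTop ℝ)) := by
  have hσ_le : ∀ r, MeasurableSet[F r] {ω | σ ω ≤ r} := fun r => by simpa using hσ r
  have hσ_meas : Measurable σ := measurable_of_Iic fun r => F.le r _ (hσ_le r)
  refine ⟨D σ, .rfl, fun r => ?_⟩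
  obtain ⟨g, hg, hDg⟩ := hDadapted r _ (stronglyMeasurable_one.indicator (hσ_le r))
  have hae : {ω | D σ ω ≤ r} =ᵐ[μ] g ⁻¹' {1} := by
    have h := ((apply_indicator_preimage_ae_eq hDborel hσ_meas
      (measurableSet_Iic (a := r))).symm.trans hDg).preimage {1}
    rwa [Set.indicator_one_preimage_one] at h
  simp only [WithTop.coe_le_coe]
  exact MeasurableSet.of_ae_eq_of_null (hF'complete r) (F'.le r)
    (hDmeas σ hσ_meas measurableSet_Iic) (hg.measurable (measurableSet_singleton 1)) hae

/-- Decoupling preserves stopping times: let `D` be an (abstract) decoupling operator on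
random variables which is distribution preserving, commutes (a.e.) with Borel functions of
finitely many random variables, and maps `ℱ_r`-measurable variables to variables having
`ℱ_r^{(s,t]}`-measurable representatives, where the decoupled filtration `ℱ^{(s,t]}` is
augmented by the null sets. Then for every stopping time `σ : Ω → [0,T]` for `ℱ`, the
decoupled random variable `D σ` admits a representative which is a stopping time for
`ℱ^{(s,t]}`. -/
theorem decoupled_stopping_time
    {Ω : Type*} {m0 : MeasurableSpace Ω} {μ : Measure Ω} [IsProbabilityMeasure μ]
    (T : ℝ) (hT : 0 < T)
    (F F' : Filtration ℝ m0)
    (D : (Ω → ℝ) → (Ω → ℝ))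
    (hDmeas : ∀ f : Ω → ℝ, Measurable f → Measurable (D f))
    (hDdist : ∀ f : Ω → ℝ, Measurable f → μ.map (D f) = μ.map f)
    (hDborel : ∀ (n : ℕ) (f : Fin n → Ω → ℝ) (g : (Fin n → ℝ) → ℝ),
      (∀ i, Measurable (f i)) → Measurable g →
      D (fun ω => g (fun i => f i ω)) =ᵐ[μ] fun ω => g (fun i => D (f i) ω))
    (hDadapted : ∀ (r : ℝ) (f : Ω → ℝ), StronglyMeasurable[F r] f →
      ∃ g : Ω → ℝ, StronglyMeasurable[F' r] g ∧ D f =ᵐ[μ] g)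
    (hF'complete : ∀ (r : ℝ) (N : Set Ω), MeasurableSet N → μ N = 0 →
      MeasurableSet[F' r] N)
    (σ : Ω → ℝ) (hσ : IsStoppingTime F (fun ω => (σ ω : WithTop ℝ))) (hσmem : ∀ ω, σ ω ∈ Set.Icc 0 T) :
    ∃ σ' : Ω → ℝ, σ' =ᵐ[μ] D σ ∧ IsStoppingTime F' (fun ω => (σ' ω : WithTop ℝ)) :=
  decoupled_stopping_time_general F F' D hDmeas hDborel hDadapted hF'complete σ hσ
end
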